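/- (Controllable non-minimal realization.) Let A ∈ ℝ^{n×n}, B ∈ ℝ^{n×m}, C ∈ ℝ^{p×n}. Suppose the pair (A,B) is controllable, i.e., rank [B, AB, …, A^{n−1}B] = n, and fix L ≥ 1 such that the extended observability matrix 𝒪_L has full column rank n. Let r = mL + n. Then there exist a matrix T ∈ ℝ^{r×(mL+pL)} of full row rank r and matrices A_z ∈ ℝ^{r×r}, B_z ∈ ℝ^{r×m}, C_z ∈ ℝ^{p×r} with rank [B_z, A_z B_z, …, A_z^{r−1} B_z] = r (controllability of (A_z,B_z)), such that for every trajectory u, x, y satisfying x(t+1) = A·x(t) + B·u(t) and y(t) = C·x(t) for all t, the reduced state z_t := T·ξ_t satisfies z_{t+1} = A_z·z_t + B_z·u(t) and y(t) = C_z·z_t for all t ≥ L. -/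

import Mathlib

open Matrix Finset

/-- Extended observability matrix `𝒪_L = [C A^{L−1}; …; C A; C]`
(block row `i` is `C * A ^ (L - 1 - i)`). -/
def obsMat (n p L : ℕ) (A : Matrix (Fin n) (Fin n) ℝ) (C : Matrix (Fin p) (Fin n) ℝ) :
    Matrix (Fin L × Fin p) (Fin n) ℝ :=
  fun ia j => (C * A ^ (L - 1 - (ia.1 : ℕ))) ia.2 j

/-- The controllability matrix `[B, A B, …, A^{d−1} B]` of a pair `(A, B)` with `d` states. -/
def ctrbPairMat (d m : ℕ) (A : Matrix (Fin d) (Fin d) ℝ) (B : Matrix (Fin d) (Fin m) ℝ) :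
    Matrix (Fin d) (Fin d × Fin m) ℝ :=
  fun i kb => (A ^ (kb.1 : ℕ) * B) i kb.2

/-- Stacked past inputs `u_{t,L} = (u(t−1), …, u(t−L))`, most recent first. -/
def uStack (m L : ℕ) (u : ℕ → Fin m → ℝ) (t : ℕ) : Fin L × Fin m → ℝ :=
  fun jb => u (t - 1 - (jb.1 : ℕ)) jb.2

/-- Stacked past outputs `y_{t,L} = (y(t−1), …, y(t−L))`, most recent first. -/
def yStack (p L : ℕ) (y : ℕ → Fin p → ℝ) (t : ℕ) : Fin L × Fin p → ℝ :=
  fun jc => y (t - 1 - (jc.1 : ℕ)) jc.2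

/-- The non-minimal state `ξ_t = (u_{t,L}, y_{t,L})`. -/
def xiState (m p L : ℕ) (u : ℕ → Fin m → ℝ) (y : ℕ → Fin p → ℝ) (t : ℕ) :
    (Fin L × Fin m) ⊕ (Fin L × Fin p) → ℝ :=
  Sum.elim (uStack m L u t) (yStack p L y t)

/-!
The realization keeps as state `z_t = (u_{t,L}, x(t - L))`: the stacked inputs are shifted by one
slot per step, and `x(t - L)` is advanced by `A` and the oldest stacked input `u(t - L)`. Since
`y_{t,L} = 𝒪_L x(t - L) + (Toeplitz matrix of Markov parameters) u_{t,L}` and `𝒪_L` has a left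
inverse `P`, `z_t = T ξ_t` for a block-triangular `T` with a right inverse. For controllability,
`A_z^k B_z` is the unit block placing the input in slot `k` of the stack when `k < L`, and
`(0, A^{k-L} B)` when `k ≥ L`; so the controllability matrix of `(A_z, B_z)` has
`diag(I, [B, …, A^{n-1} B])` as a column submatrix.
-/

section RankInverse

variable {K : Type*} [Field K] {ι κ : Type*} [Fintype ι] [Fintype κ]

theorem Matrix.rank_eq_card_height_iff_exists_mul_eq_one [DecidableEq ι] (M : Matrix ι κ K) :
    M.rank = Fintype.card ι ↔ ∃ N : Matrix κ ι K, M * N = 1 := by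
  rw [← mulVec_surjective_iff_exists_right_inverse, ← Matrix.coe_mulVecLin,
    ← LinearMap.range_eq_top, Matrix.rank, ← Module.finrank_fintype_fun_eq_card (R := K)]
  exact ⟨Submodule.eq_top_of_finrank_eq, fun h => by rw [h, finrank_top]⟩

theorem Matrix.exists_mul_eq_one_of_rank_eq_card_width [DecidableEq ι] [DecidableEq κ]
    (M : Matrix ι κ K) (h : M.rank = Fintype.card κ) : ∃ N : Matrix κ ι K, N * M = 1 := by
  obtain ⟨N, hN⟩ :=
    Mᵀ.rank_eq_card_height_iff_exists_mul_eq_one.mp (by rw [rank_transpose, h])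
  exact ⟨Nᵀ, by rw [← transpose_transpose M, ← transpose_mul, hN, transpose_one]⟩

end RankInverse

theorem Matrix.reindex_mulVec {R ι ι' κ κ' : Type*} [NonUnitalNonAssocSemiring R] [Fintype κ]
    [Fintype κ'] (e : ι ≃ ι') (f : κ ≃ κ') (M : Matrix ι κ R) (v : κ' → R) :
    M.reindex e f *ᵥ v = (M *ᵥ (v ∘ f)) ∘ e.symm := by
  rw [reindex_apply, submatrix_mulVec_equiv, Equiv.symm_symm]

/-- `ctrbPairMat d m A B` is definitionally `ctrbMat d A B`. -/
def ctrbMat {R ι β : Type*} [CommSemiring R] [Fintype ι] [DecidableEq ι] (k : ℕ)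
    (A : Matrix ι ι R) (B : Matrix ι β R) : Matrix ι (Fin k × β) R :=
  fun i jb => (A ^ (jb.1 : ℕ) * B) i jb.2

theorem ctrbMat_reindex {R ι ι' β : Type*} [CommSemiring R] [Fintype ι] [DecidableEq ι]
    [Fintype ι'] [DecidableEq ι'] (k : ℕ) (e : ι ≃ ι') (A : Matrix ι ι R) (B : Matrix ι β R) :
    ctrbMat k (A.reindex e e) (B.reindex e (Equiv.refl β))
      = (ctrbMat k A B).reindex e (Equiv.refl _) := by
  ext i jb
  rw [ctrbMat, ← coe_reindexAlgEquiv R R, ← map_pow, coe_reindexAlgEquiv, reindex_apply,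
    reindex_apply, submatrix_mul_equiv]
  rfl

theorem Fin.sum_univ_ite_val_eq {M : Type*} [AddCommMonoid M] (L k : ℕ) (g : ℕ → M) :
    ∑ j : Fin L, (if (j : ℕ) = k then g j else 0) = if k < L then g k else 0 := by
  rw [Fin.sum_univ_eq_sum_range (fun j => if j = k then g j else 0), Finset.sum_ite_eq']
  simp only [Finset.mem_range]

theorem Finset.sum_range_ite_lt {M : Type*} [AddCommMonoid M] (L i : ℕ) (f : ℕ → M) :
    ∑ k ∈ range L, (if i < k then f k else 0) = ∑ j ∈ range (L - 1 - i), f (i + 1 + j) := by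
  rw [← Finset.sum_filter, show (range L).filter (i < ·) = Ico (i + 1) L by ext; simp; omega,
    Finset.sum_Ico_eq_sum_range, show L - (i + 1) = L - 1 - i by omega]

section Realization

variable {n m p L : ℕ}

def shiftDown (L m : ℕ) : Matrix (Fin L × Fin m) (Fin L × Fin m) ℝ :=
  fun i j => if (i.1 : ℕ) = j.1 + 1 ∧ i.2 = j.2 then 1 else 0

def pulse (L m k : ℕ) : Matrix (Fin L × Fin m) (Fin m) ℝ :=
  fun i b => if (i.1 : ℕ) = k ∧ i.2 = b then 1 else 0

theorem shiftDown_mulVec (f : ℕ → Fin m → ℝ) :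
    shiftDown L m *ᵥ (fun j => f j.1 j.2)
      = fun i => if (i.1 : ℕ) = 0 then 0 else f (i.1 - 1) i.2 := by
  ext ⟨i, b⟩
  simp only [mulVec, dotProduct, shiftDown, Fintype.sum_prod_type, ite_mul, one_mul, zero_mul,
    ite_and, Finset.sum_ite_irrel, Finset.sum_ite_eq, Finset.mem_univ, if_true,
    Finset.sum_const_zero]
  rcases Nat.eq_zero_or_pos (i : ℕ) with hi | hi
  · simp [hi]
  · have hshift : ∀ j : ℕ, (i : ℕ) = j + 1 ↔ j = i - 1 := by omega
    simp only [hshift, if_neg hi.ne']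
    rw [Fin.sum_univ_ite_val_eq L _ (fun j => f j b), if_pos (by omega)]

theorem pulse_transpose_mulVec (k : ℕ) (f : ℕ → Fin m → ℝ) :
    (pulse L m k)ᵀ *ᵥ (fun j => f j.1 j.2) = if k < L then f k else 0 := by
  ext b
  simp only [mulVec, dotProduct, pulse, transpose_apply, Fintype.sum_prod_type, ite_mul, one_mul,
    zero_mul, ite_and, Finset.sum_ite_irrel, Finset.sum_ite_eq', Finset.mem_univ, if_true,
    Finset.sum_const_zero]
  rw [Fin.sum_univ_ite_val_eq L _ (fun j => f j b)]
  split_ifs <;> rfl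

theorem pulse_mulVec (k : ℕ) (v : Fin m → ℝ) :
    pulse L m k *ᵥ v = fun i => if (i.1 : ℕ) = k then v i.2 else 0 := by
  ext ⟨i, b⟩
  simp only [mulVec, dotProduct, pulse, ite_mul, one_mul, zero_mul, ite_and,
    Finset.sum_ite_irrel, Finset.sum_ite_eq, Finset.mem_univ, if_true, Finset.sum_const_zero]

theorem shiftDown_mul_pulse (k : ℕ) : shiftDown L m * pulse L m k = pulse L m (k + 1) := by
  ext i c
  have h := congrFun (shiftDown_mulVec (L := L) fun j b => if j = k ∧ b = c then 1 else 0) i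
  refine h.trans ?_
  grind [pulse]

theorem pulse_transpose_mul_pulse (j k : ℕ) :
    (pulse L m j)ᵀ * pulse L m k = if j = k ∧ k < L then 1 else 0 := by
  ext b c
  have h :=
    congrFun (pulse_transpose_mulVec (L := L) j fun i b => if i = k ∧ b = c then 1 else 0) b
  refine h.trans ?_
  split_ifs <;> simp_all [Matrix.one_apply]
  omega

theorem uStack_succ (u : ℕ → Fin m → ℝ) (t : ℕ) :
    uStack m L u (t + 1) = shiftDown L m *ᵥ uStack m L u t + pulse L m 0 *ᵥ u t := by
  ext ⟨i, b⟩
  have h : (shiftDown L m *ᵥ uStack m L u t) (i, b)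
      = if (i : ℕ) = 0 then 0 else u (t - 1 - ((i : ℕ) - 1)) b :=
    congrFun (shiftDown_mulVec fun j b => u (t - 1 - j) b) (i, b)
  rw [Pi.add_apply, h, pulse_mulVec]
  simp only [uStack]
  split_ifs with hi
  · simp [hi]
  · rw [add_zero, show t + 1 - 1 - (i : ℕ) = t - 1 - ((i : ℕ) - 1) by omega]

variable (A : Matrix (Fin n) (Fin n) ℝ) (B : Matrix (Fin n) (Fin m) ℝ)
  (C : Matrix (Fin p) (Fin n) ℝ)

theorem ctrbMat_mulVec_uStack (k : ℕ) (u : ℕ → Fin m → ℝ) (t : ℕ) :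
    ctrbMat k A B *ᵥ uStack m k u t = ∑ j ∈ range k, (A ^ j * B) *ᵥ u (t - 1 - j) := by
  ext q
  simp only [mulVec, dotProduct, ctrbMat, uStack, Fintype.sum_prod_type, Finset.sum_apply]
  exact Fin.sum_univ_eq_sum_range (fun j => ∑ b, (A ^ j * B) q b * u (t - 1 - j) b) k

theorem trajectory_add {u : ℕ → Fin m → ℝ} {x : ℕ → Fin n → ℝ}
    (hx : ∀ t, x (t + 1) = A *ᵥ x t + B *ᵥ u t) (s k : ℕ) :
    x (s + k) = (A ^ k) *ᵥ x s + ∑ j ∈ range k, (A ^ j * B) *ᵥ u (s + k - 1 - j) := by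
  induction k with
  | zero => simp
  | succ k ih =>
    rw [← add_assoc, hx, ih, mulVec_add, mulVec_mulVec, ← pow_succ', mulVec_sum,
      Finset.sum_range_succ', pow_zero, Matrix.one_mul, add_assoc]
    congr 2
    refine Finset.sum_congr rfl fun j _ => ?_
    rw [mulVec_mulVec, ← Matrix.mul_assoc, ← pow_succ',
      show s + k - 1 - j = s + k + 1 - 1 - (j + 1) by omega]

/-- Block row `i` sends `u_{t,L}` to the contribution of `u(t-L), …, u(t-2-i)` to `y(t-1-i)`. -/
def markovToeplitz (L : ℕ) : Matrix (Fin L × Fin p) (Fin L × Fin m) ℝ :=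
  fun ic kb => if (ic.1 : ℕ) < kb.1 then (C * A ^ ((kb.1 : ℕ) - ic.1 - 1) * B) ic.2 kb.2 else 0

theorem markovToeplitz_mulVec_uStack (u : ℕ → Fin m → ℝ) (t : ℕ) (i : Fin L) (c : Fin p) :
    (markovToeplitz A B C L *ᵥ uStack m L u t) (i, c)
      = (C *ᵥ ∑ j ∈ range (L - 1 - i), (A ^ j * B) *ᵥ u (t - 1 - i - 1 - j)) c := by
  have hrow : (markovToeplitz A B C L *ᵥ uStack m L u t) (i, c) = ∑ k ∈ range L,
      if (i : ℕ) < k then ((C * A ^ (k - i - 1) * B) *ᵥ u (t - 1 - k)) c else 0 := by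
    rw [← Fin.sum_univ_eq_sum_range
      (fun k => if (i : ℕ) < k then ((C * A ^ (k - i - 1) * B) *ᵥ u (t - 1 - k)) c else 0)]
    simp only [mulVec, dotProduct, markovToeplitz, uStack, Fintype.sum_prod_type, ite_mul,
      zero_mul, Finset.sum_ite_irrel, Finset.sum_const_zero]
  rw [hrow, Finset.sum_range_ite_lt, mulVec_sum, Finset.sum_apply]
  refine Finset.sum_congr rfl fun j _ => ?_
  rw [mulVec_mulVec, ← Matrix.mul_assoc, show (i : ℕ) + 1 + j - i - 1 = j by omega,
    show t - 1 - ((i : ℕ) + 1 + j) = t - 1 - i - 1 - j by omega]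

theorem yStack_eq {u : ℕ → Fin m → ℝ} {x : ℕ → Fin n → ℝ} {y : ℕ → Fin p → ℝ}
    (hx : ∀ t, x (t + 1) = A *ᵥ x t + B *ᵥ u t) (hy : ∀ t, y t = C *ᵥ x t) {t : ℕ}
    (ht : L ≤ t) :
    yStack p L y t
      = obsMat n p L A C *ᵥ x (t - L) + markovToeplitz A B C L *ᵥ uStack m L u t := by
  ext ⟨i, c⟩
  have hi := i.isLt
  rw [Pi.add_apply, markovToeplitz_mulVec_uStack, yStack, hy,
    show t - 1 - (i : ℕ) = t - L + (L - 1 - i) by omega, trajectory_add A B hx, mulVec_add,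
    mulVec_mulVec, Pi.add_apply]
  rfl

variable (L) in
def delayedA : Matrix ((Fin L × Fin m) ⊕ Fin n) ((Fin L × Fin m) ⊕ Fin n) ℝ :=
  fromBlocks (shiftDown L m) 0 (B * (pulse L m (L - 1))ᵀ) A

variable (n m L) in
def delayedB : Matrix ((Fin L × Fin m) ⊕ Fin n) (Fin m) ℝ :=
  fromRows (pulse L m 0) 0

variable (L) in
def delayedC : Matrix (Fin p) ((Fin L × Fin m) ⊕ Fin n) ℝ :=
  fromCols (C * ctrbMat L A B) (C * A ^ L)

/-- With `P` a left inverse of `𝒪_L`, `x(t - L) = P (y_{t,L} - markovToeplitz · u_{t,L})`. -/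
def delayedT (P : Matrix (Fin n) (Fin L × Fin p) ℝ) :
    Matrix ((Fin L × Fin m) ⊕ Fin n) ((Fin L × Fin m) ⊕ (Fin L × Fin p)) ℝ :=
  fromBlocks 1 0 (-(P * markovToeplitz A B C L)) P

variable (L) in
def delayedState (u : ℕ → Fin m → ℝ) (x : ℕ → Fin n → ℝ) (t : ℕ) :
    (Fin L × Fin m) ⊕ Fin n → ℝ :=
  Sum.elim (uStack m L u t) (x (t - L))

theorem delayedT_mulVec_xiState {P : Matrix (Fin n) (Fin L × Fin p) ℝ}
    (hP : P * obsMat n p L A C = 1) {u : ℕ → Fin m → ℝ} {x : ℕ → Fin n → ℝ} {y : ℕ → Fin p → ℝ}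
    (hx : ∀ t, x (t + 1) = A *ᵥ x t + B *ᵥ u t) (hy : ∀ t, y t = C *ᵥ x t) {t : ℕ}
    (ht : L ≤ t) :
    delayedT A B C P *ᵥ xiState m p L u y t = delayedState L u x t := by
  simp only [delayedT, fromBlocks_mulVec, xiState, Sum.elim_comp_inl, Sum.elim_comp_inr,
    yStack_eq A B C hx hy ht, mulVec_add, mulVec_mulVec, hP, one_mulVec, Matrix.zero_mul,
    zero_mulVec, add_zero, neg_mulVec, neg_add_cancel_comm_assoc, delayedState]

theorem delayedState_succ (hL : 1 ≤ L) {u : ℕ → Fin m → ℝ} {x : ℕ → Fin n → ℝ}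
    (hx : ∀ t, x (t + 1) = A *ᵥ x t + B *ᵥ u t) {t : ℕ} (ht : L ≤ t) :
    delayedState L u x (t + 1)
      = delayedA L A B *ᵥ delayedState L u x t + delayedB n m L *ᵥ u t := by
  simp only [delayedA, delayedB, fromBlocks_mulVec, fromRows_mulVec, delayedState,
    Sum.elim_comp_inl, Sum.elim_comp_inr, ← Sum.elim_add_add, zero_mulVec, add_zero, ← uStack_succ]
  congr 1
  rw [← mulVec_mulVec, show uStack m L u t = fun j => u (t - 1 - j.1) j.2 from rfl,
    pulse_transpose_mulVec (f := fun k => u (t - 1 - k)), if_pos (by omega),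
    show t + 1 - L = t - L + 1 by omega, hx, show t - 1 - (L - 1) = t - L by omega, add_comm]

theorem output_eq_delayedC_mulVec {u : ℕ → Fin m → ℝ} {x : ℕ → Fin n → ℝ} {y : ℕ → Fin p → ℝ}
    (hx : ∀ t, x (t + 1) = A *ᵥ x t + B *ᵥ u t) (hy : ∀ t, y t = C *ᵥ x t) {t : ℕ}
    (ht : L ≤ t) :
    y t = delayedC L A B C *ᵥ delayedState L u x t := by
  have hxt := trajectory_add A B hx (t - L) L
  rw [Nat.sub_add_cancel ht] at hxt
  rw [delayedC, delayedState, fromCols_mulVec_sumElim, ← mulVec_mulVec, ← mulVec_mulVec,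
    ctrbMat_mulVec_uStack, hy, ← mulVec_add, hxt, add_comm]

theorem delayedA_pow_mul_delayedB (hL : 1 ≤ L) (k : ℕ) :
    delayedA L A B ^ k * delayedB n m L
      = fromRows (pulse L m k) (if L ≤ k then A ^ (k - L) * B else 0) := by
  induction k with
  | zero => rw [pow_zero, Matrix.one_mul, delayedB, if_neg (by omega)]
  | succ k ih =>
    rw [pow_succ', Matrix.mul_assoc, ih, delayedA, fromBlocks_mul_fromRows, shiftDown_mul_pulse,
      Matrix.zero_mul, add_zero, Matrix.mul_assoc, pulse_transpose_mul_pulse]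
    congr 1
    rcases lt_trichotomy (k + 1) L with hlt | rfl | hgt
    · simp [show ¬L ≤ k by omega, show ¬L ≤ k + 1 by omega, show L - 1 ≠ k by omega]
    · simp
    · rw [if_neg (by omega), if_pos (by omega), if_pos (by omega), Matrix.mul_zero, zero_add,
        ← Matrix.mul_assoc, ← pow_succ', show k - L + 1 = k + 1 - L by omega]

theorem rank_ctrbMat_delayedA_delayedB (hL : 1 ≤ L) (hctrb : (ctrbMat n A B).rank = n) {k : ℕ}
    (hk : L * m + n ≤ k) :
    (ctrbMat k (delayedA L A B) (delayedB n m L)).rank = L * m + n := by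
  obtain ⟨N, hN⟩ := (ctrbMat n A B).rank_eq_card_height_iff_exists_mul_eq_one.mp
    (by rwa [Fintype.card_fin])
  -- the input index `b : Fin m` of a column supplies `0 < m`, hence `L + n ≤ k`
  have hLm (b : Fin m) : L ≤ L * m := Nat.le_mul_of_pos_right L b.pos
  let g : (Fin L × Fin m) ⊕ (Fin n × Fin m) → Fin k × Fin m :=
    Sum.elim (fun ib => (⟨ib.1, by have := hLm ib.2; omega⟩, ib.2))
      (fun jb => (⟨L + jb.1, by have := hLm jb.2; omega⟩, jb.2))
  have hsub : (ctrbMat k (delayedA L A B) (delayedB n m L)).submatrix id g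
      = fromBlocks (1 : Matrix (Fin L × Fin m) (Fin L × Fin m) ℝ) 0 0 (ctrbMat n A B) := by
    ext (i | q) (ib | jb)
    · simp [g, ctrbMat, delayedA_pow_mul_delayedB A B hL, pulse, Matrix.one_apply, Prod.ext_iff,
        Fin.ext_iff]
    · have := i.1.isLt
      simp [g, ctrbMat, delayedA_pow_mul_delayedB A B hL, pulse]
      omega
    · have := ib.1.isLt
      simp [g, ctrbMat, delayedA_pow_mul_delayedB A B hL, show ¬L ≤ (ib.1 : ℕ) by omega]
    · simp [g, ctrbMat, delayedA_pow_mul_delayedB A B hL]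
  have hblock : (fromBlocks (1 : Matrix (Fin L × Fin m) (Fin L × Fin m) ℝ) 0 0
      (ctrbMat n A B)).rank = L * m + n := by
    rw [show L * m + n = Fintype.card ((Fin L × Fin m) ⊕ Fin n) by simp,
      rank_eq_card_height_iff_exists_mul_eq_one]
    exact ⟨fromBlocks 1 0 0 N, by simp [fromBlocks_multiply, hN]⟩
  refine le_antisymm ?_ (hblock ▸ hsub ▸ rank_submatrix_le _ _ _)
  simpa using rank_le_card_height (ctrbMat k (delayedA L A B) (delayedB n m L))

theorem rank_delayedT {P : Matrix (Fin n) (Fin L × Fin p) ℝ} (hP : P * obsMat n p L A C = 1) :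
    (delayedT A B C P).rank = L * m + n := by
  rw [show L * m + n = Fintype.card ((Fin L × Fin m) ⊕ Fin n) by simp,
    rank_eq_card_height_iff_exists_mul_eq_one]
  exact ⟨fromBlocks 1 0 (markovToeplitz A B C L) (obsMat n p L A C),
    by simp [delayedT, fromBlocks_multiply, hP]⟩

end Realization

theorem controllable_nonminimal_realization
    (n m p L : ℕ) (hL : 1 ≤ L)
    (A : Matrix (Fin n) (Fin n) ℝ) (B : Matrix (Fin n) (Fin m) ℝ)
    (C : Matrix (Fin p) (Fin n) ℝ)
    (hctrb : (ctrbPairMat n m A B).rank = n)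
    (hobs : (obsMat n p L A C).rank = n) :
    ∃ (T : Matrix (Fin (m * L + n)) ((Fin L × Fin m) ⊕ (Fin L × Fin p)) ℝ)
      (Az : Matrix (Fin (m * L + n)) (Fin (m * L + n)) ℝ)
      (Bz : Matrix (Fin (m * L + n)) (Fin m) ℝ)
      (Cz : Matrix (Fin p) (Fin (m * L + n)) ℝ),
      T.rank = m * L + n ∧
      (ctrbPairMat (m * L + n) m Az Bz).rank = m * L + n ∧
      ∀ (u : ℕ → Fin m → ℝ) (x : ℕ → Fin n → ℝ) (y : ℕ → Fin p → ℝ),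
        (∀ t : ℕ, x (t + 1) = A.mulVec (x t) + B.mulVec (u t)) →
        (∀ t : ℕ, y t = C.mulVec (x t)) →
        ∀ t : ℕ, L ≤ t →
          T.mulVec (xiState m p L u y (t + 1)) =
              Az.mulVec (T.mulVec (xiState m p L u y t)) + Bz.mulVec (u t) ∧
            y t = Cz.mulVec (T.mulVec (xiState m p L u y t)) := by
  obtain ⟨P, hP⟩ := (obsMat n p L A C).exists_mul_eq_one_of_rank_eq_card_width
    (by rwa [Fintype.card_fin])
  let e : ((Fin L × Fin m) ⊕ Fin n) ≃ Fin (m * L + n) :=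
    Fintype.equivFinOfCardEq (by simp [Nat.mul_comm])
  refine ⟨(delayedT A B C P).reindex e (Equiv.refl _), (delayedA L A B).reindex e e,
    (delayedB n m L).reindex e (Equiv.refl _), (delayedC L A B C).reindex (Equiv.refl _) e,
    ?_, ?_, ?_⟩
  · rw [rank_reindex, rank_delayedT A B C hP, Nat.mul_comm]
  · change (ctrbMat _ _ _).rank = _
    rw [ctrbMat_reindex, rank_reindex, Nat.mul_comm,
      rank_ctrbMat_delayedA_delayedB A B hL hctrb (Nat.mul_comm L m ▸ le_rfl)]
  · intro u x y hx hy t ht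
    simp only [Matrix.reindex_mulVec, Equiv.coe_refl, Function.comp_id, Function.comp_assoc,
      Equiv.symm_comp_self, delayedT_mulVec_xiState A B C hP hx hy ht,
      delayedT_mulVec_xiState A B C hP hx hy (Nat.le_succ_of_le ht),
      delayedState_succ A B hL hx ht]
    exact ⟨rfl, output_eq_delayedC_mulVec A B C hx hy ht⟩
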